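/- arXiv:2108.05492 — 7 statements merged into one kernel-verified Lean document; each statement's English description precedes it below -/
import Mathlib

section
/- Let G be a k-vertex-critical graph. Then there do not exist two nonempty disjoint vertex subsets X and Y of G such that: X and Y are anticomplete to each other (no edges between them), χ(G[X]) ≤ χ(G[Y]), and every vertex of Y is adjacent to every vertex of N(X) = (⋃_{x∈X} N(x)) \ X. -/
open SimpleGraph

/-- A graph is `k`-vertex-critical if its chromatic number is `k` and deleting
any vertex decreases the chromatic number below `k`. -/
def IsKVertexCritical {V : Type} (G : SimpleGraph V) (k : ℕ) : Prop :=
  G.chromaticNumber = k ∧ ∀ v : V, (G.induce {v}ᶜ).chromaticNumber < k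

/-- `G` contains an induced subgraph isomorphic to `H`. -/
def HasInducedCopy {V W : Type} (G : SimpleGraph V) (H : SimpleGraph W) : Prop :=
  ∃ s : Set V, Nonempty (H ≃g G.induce s)

/-- The path on 5 vertices. -/
def P5 : SimpleGraph (Fin 5) := SimpleGraph.pathGraph 5

/-- The disjoint union of a path on 3 vertices (0-1-2) and an edge (3-4). -/
def P3P2 : SimpleGraph (Fin 5) :=
  SimpleGraph.fromRel (fun a b => (a = 0 ∧ b = 1) ∨ (a = 1 ∧ b = 2) ∨ (a = 3 ∧ b = 4))

/-- The complement of `P3 + P2`. -/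
def coP3P2 : SimpleGraph (Fin 5) := P3P2ᶜ

/-- The 3-vertex graph with exactly one edge (the disjoint union `P2 + P1`). -/
def P2P1 : SimpleGraph (Fin 3) := SimpleGraph.fromRel (fun a b => a = 0 ∧ b = 1)

/-- A `k`-vertex-critical graph has no two nonempty disjoint anticomplete sets `X`, `Y`
with `χ(G[X]) ≤ χ(G[Y])` and `Y` complete to `N(X)`. -/
theorem stmt_2 {V : Type} [Fintype V] (G : SimpleGraph V) (k : ℕ)
    (hG : IsKVertexCritical G k) :
    ¬ ∃ X Y : Set V, X.Nonempty ∧ Y.Nonempty ∧ Disjoint X Y ∧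
      (∀ x ∈ X, ∀ y ∈ Y, ¬ G.Adj x y) ∧
      (G.induce X).chromaticNumber ≤ (G.induce Y).chromaticNumber ∧
      (∀ y ∈ Y, ∀ w ∈ (⋃ x ∈ X, G.neighborSet x) \ X, G.Adj y w) := by
  classical
  rintro ⟨X, Y, ⟨x0, hx0⟩, hYne, hdisj, hanti, hchi, hcomp⟩
  obtain ⟨hchiG, hcrit⟩ := hG
  have hlt := hcrit x0
  have hk : 1 ≤ k := by
    by_contra h
    push_neg at h
    interval_cases k
    simp at hlt
  -- χ(G - x0) ≤ k-1
  have hle : (G.induce {x0}ᶜ).chromaticNumber ≤ ((k - 1 : ℕ) : ℕ∞) := by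
    obtain ⟨m, hm⟩ := (SimpleGraph.chromaticNumber_ne_top_iff_exists).mp (ne_top_of_lt hlt)
    have h1 := hm.chromaticNumber_le
    obtain ⟨m', hm'⟩ := Option.ne_none_iff_exists'.mp (ne_top_of_lt hlt)
    have hm'' : (G.induce {x0}ᶜ).chromaticNumber = (m' : ℕ∞) := hm'
    rw [hm''] at hlt ⊢
    have : m' < k := by exact_mod_cast hlt
    exact_mod_cast Nat.le_sub_one_of_lt this
  obtain ⟨c⟩ := SimpleGraph.chromaticNumber_le_iff_colorable.mp hle
  -- vertices of Y avoid x0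
  have hYx0 : ∀ {v : V}, v ∈ Y → v ∈ ({x0}ᶜ : Set V) := by
    intro v hv hv'
    rw [Set.mem_singleton_iff] at hv'
    exact (Set.disjoint_left.mp hdisj hx0) (hv' ▸ hv)
  set g : Y → Fin (k - 1) := fun y => c ⟨y.1, hYx0 y.2⟩ with hg
  set S : Set (Fin (k - 1)) := Set.range g with hS
  haveI : Fintype S := Fintype.ofFinite _
  -- coloring of G[Y] using colors in S
  have cY : (G.induce Y).Coloring S :=
    SimpleGraph.Coloring.mk (fun y => ⟨g y, Set.mem_range_self y⟩) (by
      intro a b hab h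
      have hadj : (G.induce {x0}ᶜ).Adj ⟨a.1, hYx0 a.2⟩ ⟨b.1, hYx0 b.2⟩ := hab
      exact c.valid hadj (congrArg Subtype.val h))
  have hYcard : (G.induce Y).chromaticNumber ≤ (Fintype.card S : ℕ∞) :=
    cY.colorable.chromaticNumber_le
  obtain ⟨d⟩ := SimpleGraph.chromaticNumber_le_iff_colorable.mp (hchi.trans hYcard)
  let e : Fin (Fintype.card S) ≃ S := (Fintype.equivFin S).symm
  have hmem : ∀ {v : V}, v ∉ X → v ∈ ({x0}ᶜ : Set V) := by
    intro v hv hv'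
    rw [Set.mem_singleton_iff] at hv'
    exact hv (hv' ▸ hx0)
  let f : V → Fin (k - 1) := fun v =>
    if h : v ∈ X then ((e (d ⟨v, h⟩)) : Fin (k - 1)) else c ⟨v, hmem h⟩
  -- key: colors used on X belong to S, colors of neighbors of X outside X don't clash
  have hcross : ∀ (a : S) (v), v ∈ X → ∀ w, w ∉ X → G.Adj v w → ∀ (hw : w ∈ ({x0}ᶜ : Set V)),
      (a : Fin (k-1)) ≠ c ⟨w, hw⟩ := by
    intro a v hv w hw hadj hw' heq
    obtain ⟨y, hy⟩ := a.2
    have hwN : w ∈ (⋃ x ∈ X, G.neighborSet x) \ X :=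
      ⟨Set.mem_biUnion hv hadj, hw⟩
    have hadj2 : G.Adj y.1 w := hcomp y.1 y.2 w hwN
    have : (G.induce {x0}ᶜ).Adj ⟨y.1, hYx0 y.2⟩ ⟨w, hw'⟩ := hadj2
    exact c.valid this (hy.trans heq)
  have hf : ∀ {v w : V}, G.Adj v w → f v ≠ f w := by
    intro v w hadj heq
    by_cases hv : v ∈ X <;> by_cases hw : w ∈ X
    · simp only [f, dif_pos hv, dif_pos hw] at heq
      have : (G.induce X).Adj ⟨v, hv⟩ ⟨w, hw⟩ := hadj
      exact d.valid this (e.injective (Subtype.val_injective heq))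
    · simp only [f, dif_pos hv, dif_neg hw] at heq
      exact hcross (e (d ⟨v, hv⟩)) v hv w hw hadj (hmem hw) heq
    · simp only [f, dif_neg hv, dif_pos hw] at heq
      exact hcross (e (d ⟨w, hw⟩)) w hw v hv hadj.symm (hmem hv) heq.symm
    · simp only [f, dif_neg hv, dif_neg hw] at heq
      have : (G.induce {x0}ᶜ).Adj ⟨v, hmem hv⟩ ⟨w, hmem hw⟩ := hadj
      exact c.valid this heq
  have hcol : G.Colorable (k - 1) := ⟨SimpleGraph.Coloring.mk f hf⟩
  have := hcol.chromaticNumber_le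
  rw [hchiG] at this
  have : k ≤ k - 1 := by exact_mod_cast this
  omega
end

section
/- Let G be a (P_5, \overline{P_3+P_2})-free graph containing an induced 5-cycle Q = v_1v_2v_3v_4v_5. Then there is no vertex u ∉ V(Q) and index i with N(u) ∩ V(Q) = {v_i}. -/
open SimpleGraph

/-- In a `(P5, co(P3+P2))`-free graph with an induced 5-cycle, no outside vertex has
exactly one neighbour on the cycle. -/
theorem stmt_7 {V : Type} [Fintype V] (G : SimpleGraph V)
    (hP5 : ¬ HasInducedCopy G P5) (hco : ¬ HasInducedCopy G coP3P2)
    (v : Fin 5 → V) (hv : Function.Injective v)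
    (hC5 : ∀ i j : Fin 5, G.Adj (v i) (v j) ↔ (j = i + 1 ∨ i = j + 1)) :
    ¬ ∃ u : V, (∀ i, u ≠ v i) ∧ ∃ i : Fin 5, ∀ j : Fin 5, G.Adj u (v j) ↔ j = i := by

  rintro ⟨u, hu, i, hadj⟩
  apply hP5
  have hadj' : ∀ a : Fin 5, G.Adj u (v (i + a)) ↔ a = 0 := by
    intro a
    rw [hadj, add_eq_left]
  have hCadj : ∀ a b : Fin 5, G.Adj (v (i + a)) (v (i + b)) ↔ (b = a + 1 ∨ a = b + 1) := by
    intro a b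
    rw [hC5]
    constructor
    · rintro (h | h)
      · exact Or.inl (add_left_cancel (by rw [h, add_assoc]))
      · exact Or.inr (add_left_cancel (by rw [h, add_assoc]))
    · rintro (h | h)
      · exact Or.inl (by rw [h, add_assoc])
      · exact Or.inr (by rw [h, add_assoc])
  set f : Fin 5 → V := ![u, v (i + 0), v (i + 1), v (i + 2), v (i + 3)] with hf
  have hvne : ∀ a b : Fin 5, a ≠ b → v (i + a) ≠ v (i + b) := by
    intro a b hab h
    exact hab (add_left_cancel (hv h))
  have hfinj : Function.Injective f := by
    intro a b hab
    fin_cases a <;> fin_cases b <;>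
      first
      | rfl
      | (exact absurd hab (hu _))
      | (exact absurd hab.symm (hu _))
      | (exact absurd hab (hvne _ _ (by decide)))
  have hadj'' : ∀ a : Fin 5, G.Adj (v (i + a)) u ↔ a = 0 := by
    intro a; rw [G.adj_comm]; exact hadj' a
  have hCadjL : ∀ b : Fin 5, G.Adj (v i) (v (i + b)) ↔ (b = 1 ∨ 0 = b + 1) := by
    intro b; simpa using hCadj 0 b
  have hCadjR : ∀ a : Fin 5, G.Adj (v (i + a)) (v i) ↔ (0 = a + 1 ∨ a = 1) := by
    intro a; simpa using hCadj a 0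
  have hadj0 : G.Adj u (v i) ↔ True := by simp [hadj]
  have hadj0' : G.Adj (v i) u ↔ True := by rw [G.adj_comm]; exact hadj0
  have hadjf : ∀ a b : Fin 5, P5.Adj a b ↔ G.Adj (f a) (f b) := by
    intro a b
    fin_cases a <;> fin_cases b <;>
      simp [hf, P5, pathGraph_adj, hCadj, hadj', hadj'', hCadjL, hCadjR, hadj0, hadj0'] <;>
      decide
  refine ⟨Set.range f, ⟨⟨Equiv.ofInjective f hfinj, ?_⟩⟩⟩
  intro a b
  simp only [comap_adj, Function.Embedding.coe_subtype, Equiv.ofInjective_apply]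
  exact (hadjf a b).symm
end

section
/- Let G be a (P_5, \overline{P_3+P_2})-free graph containing an induced 5-cycle Q = v_1v_2v_3v_4v_5, and for each vertex u ∉ V(Q), consider N(u) ∩ V(Q). Then there is no vertex u ∉ V(Q) whose neighbourhood on Q is exactly {v_i, v_{i+1}} for some i (two consecutive cycle vertices). -/
open SimpleGraph

/-! If `u` sees exactly `v i` and `v (i+1)` on the induced 5-cycle, then
`u, v (i+1), v (i+2), v (i+3), v (i+4)` is an induced `P5`. -/

theorem hasInducedCopy_of_injective_of_adj_iff {V W : Type} {G : SimpleGraph V}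
    {H : SimpleGraph W} {f : W → V} (hf : Function.Injective f)
    (hadj : ∀ a b, G.Adj (f a) (f b) ↔ H.Adj a b) : HasInducedCopy G H :=
  ⟨Set.range f, ⟨⟨Equiv.ofInjective f hf, fun {a b} => by simp [hadj]⟩⟩⟩

theorem hasInducedCopy_P5_of_adj_cycle_zero_one {V : Type} {G : SimpleGraph V}
    {v : Fin 5 → V} (hv : Function.Injective v)
    (hC5 : ∀ i j : Fin 5, G.Adj (v i) (v j) ↔ (j = i + 1 ∨ i = j + 1))
    {u : V} (hu : ∀ i, u ≠ v i) (hadj : ∀ j, G.Adj u (v j) ↔ (j = 0 ∨ j = 1)) :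
    HasInducedCopy G P5 := by
  refine hasInducedCopy_of_injective_of_adj_iff (f := Fin.cons u (v ∘ Fin.succ)) ?_ ?_
  · exact Fin.cons_injective_iff.2
      ⟨fun ⟨k, hk⟩ => hu _ hk.symm, hv.comp (Fin.succ_injective _)⟩
  · have hadj' : ∀ j, G.Adj (v j) u ↔ (j = 0 ∨ j = 1) := fun j =>
      (G.adj_comm _ _).trans (hadj j)
    intro a b
    cases a using Fin.cases <;> cases b using Fin.cases <;>
      simp [hC5, hadj, hadj', P5, pathGraph_adj] <;> decide +revert

theorem stmt_8_general {V : Type} (G : SimpleGraph V)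
    (hP5 : ¬ HasInducedCopy G P5)
    (v : Fin 5 → V) (hv : Function.Injective v)
    (hC5 : ∀ i j : Fin 5, G.Adj (v i) (v j) ↔ (j = i + 1 ∨ i = j + 1)) :
    ¬ ∃ u : V, (∀ i, u ≠ v i) ∧
      ∃ i : Fin 5, ∀ j : Fin 5, G.Adj u (v j) ↔ (j = i ∨ j = i + 1) := by
  rintro ⟨u, hu, i, hadj⟩
  have hC5_rotated : ∀ a b : Fin 5,
      G.Adj (v (i + a)) (v (i + b)) ↔ (b = a + 1 ∨ a = b + 1) := by
    simp [hC5, add_assoc]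
  have hadj_rotated : ∀ j : Fin 5, G.Adj u (v (i + j)) ↔ (j = 0 ∨ j = 1) := by
    simp [hadj]
  exact hP5 <| hasInducedCopy_P5_of_adj_cycle_zero_one (hv.comp (add_right_injective i))
    hC5_rotated (fun j => hu (i + j)) hadj_rotated

/-- In a `(P5, co(P3+P2))`-free graph with an induced 5-cycle, no outside vertex has
exactly two consecutive neighbours on the cycle. -/
theorem stmt_8 {V : Type} [Fintype V] (G : SimpleGraph V)
    (hP5 : ¬ HasInducedCopy G P5) (hco : ¬ HasInducedCopy G coP3P2)
    (v : Fin 5 → V) (hv : Function.Injective v)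
    (hC5 : ∀ i j : Fin 5, G.Adj (v i) (v j) ↔ (j = i + 1 ∨ i = j + 1)) :
    ¬ ∃ u : V, (∀ i, u ≠ v i) ∧
      ∃ i : Fin 5, ∀ j : Fin 5, G.Adj u (v j) ↔ (j = i ∨ j = i + 1) :=
  stmt_8_general G hP5 v hv hC5
end

section
/- Let G be a \overline{P_3+P_2}-free graph containing an induced 5-cycle v_1v_2v_3v_4v_5, and let U be the set of vertices outside the cycle adjacent to all five cycle vertices. Then U is a clique. Moreover, for each i, the set Y_i of vertices outside the cycle whose cycle-neighbourhood is exactly {v_{i-2}, v_i, v_{i+2}} satisfies: Y_i ∪ U is a clique. -/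
open SimpleGraph

set_option linter.unreachableTactic false
set_option linter.unusedTactic false

lemma key_coP3P2 {V : Type} (G : SimpleGraph V) (hco : ¬ HasInducedCopy G coP3P2)
    (a b c x y : V)
    (hab0 : a ≠ b) (hbc0 : b ≠ c) (hxy0 : x ≠ y)
    (hac : G.Adj a c) (hab : ¬G.Adj a b) (hbc : ¬G.Adj b c)
    (hxa : G.Adj x a) (hxb : G.Adj x b) (hxc : G.Adj x c)
    (hya : G.Adj y a) (hyb : G.Adj y b) (hyc : G.Adj y c)
    (hxy : ¬G.Adj x y) : False := by
  set w : Fin 5 → V := ![a, b, c, x, y] with hwdef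
  have hw : Function.Injective w := by
    intro i j hij
    fin_cases i <;> fin_cases j <;> simp_all [w] <;>
      first
        | rfl
        | (exfalso; simp_all [hac.ne, hac.ne', hxa.ne, hxa.ne', hxb.ne, hxb.ne',
            hxc.ne, hxc.ne', hya.ne, hya.ne', hyb.ne, hyb.ne', hyc.ne, hyc.ne'])
  apply hco
  refine ⟨Set.range w, ⟨⟨Equiv.ofInjective w hw, ?_⟩⟩⟩
  intro i j
  have hadj : ∀ i j : Fin 5, (G.induce (Set.range w)).Adj (Equiv.ofInjective w hw i)
      (Equiv.ofInjective w hw j) ↔ G.Adj (w i) (w j) := fun i j => Iff.rfl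
  rw [hadj]
  fin_cases i <;> fin_cases j <;>
    simp_all [w, coP3P2, P3P2, SimpleGraph.fromRel_adj] <;>
    first
      | exact hac.symm
      | exact hxa.symm
      | exact hxb.symm
      | exact hxc.symm
      | exact hya.symm
      | exact hyb.symm
      | exact hyc.symm
      | (intro h; exact hxy h.symm)
      | (intro h; exact hab h.symm)
      | (intro h; exact hbc h.symm)
      | skip

/-- In a `co(P3+P2)`-free graph with an induced 5-cycle, the set `U` of outside vertices
complete to the cycle is a clique, and each `Y_i ∪ U` is a clique. -/
theorem stmt_9 {V : Type} [Fintype V] (G : SimpleGraph V)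
    (hco : ¬ HasInducedCopy G coP3P2)
    (v : Fin 5 → V) (hv : Function.Injective v)
    (hC5 : ∀ i j : Fin 5, G.Adj (v i) (v j) ↔ (j = i + 1 ∨ i = j + 1)) :
    G.IsClique {u : V | (∀ i, u ≠ v i) ∧ ∀ i : Fin 5, G.Adj u (v i)} ∧
    ∀ i : Fin 5,
      G.IsClique ({u : V | (∀ j, u ≠ v j) ∧
          ∀ j : Fin 5, G.Adj u (v j) ↔ (j = i - 2 ∨ j = i ∨ j = i + 2)} ∪
        {u : V | (∀ j, u ≠ v j) ∧ ∀ j : Fin 5, G.Adj u (v j)}) := by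
  -- Fin 5 arithmetic facts
  have d1 : ∀ j : Fin 5, j + 2 ≠ j := by decide
  have d2 : ∀ j : Fin 5, j ≠ j - 2 := by decide
  have d3 : ∀ j : Fin 5, j - 2 = j + 2 + 1 := by decide
  have d4 : ∀ j : Fin 5, ¬(j = j + 2 + 1 ∨ j + 2 = j + 1) := by decide
  have d5 : ∀ j : Fin 5, ¬(j - 2 = j + 1 ∨ j = j - 2 + 1) := by decide
  have hU : G.IsClique {u : V | (∀ i, u ≠ v i) ∧ ∀ i : Fin 5, G.Adj u (v i)} := by
    intro u1 h1 u2 h2 hne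
    by_contra hadj
    exact key_coP3P2 G hco (v 2) (v 0) (v 3) u1 u2
      (fun h => by have := hv h; simp at this)
      (fun h => by have := hv h; simp at this)
      hne
      ((hC5 2 3).mpr (Or.inl rfl))
      (fun h => by have := (hC5 2 0).mp h; revert this; decide)
      (fun h => by have := (hC5 0 3).mp h; revert this; decide)
      (h1.2 2) (h1.2 0) (h1.2 3) (h2.2 2) (h2.2 0) (h2.2 3) hadj
  refine ⟨hU, fun i => ?_⟩
  have hmem : ∀ u ∈ ({u : V | (∀ j, u ≠ v j) ∧
          ∀ j : Fin 5, G.Adj u (v j) ↔ (j = i - 2 ∨ j = i ∨ j = i + 2)} ∪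
        {u : V | (∀ j, u ≠ v j) ∧ ∀ j : Fin 5, G.Adj u (v j)}),
      (∀ j, u ≠ v j) ∧ G.Adj u (v (i + 2)) ∧ G.Adj u (v i) ∧ G.Adj u (v (i - 2)) := by
    rintro u (⟨hne, ha⟩ | ⟨hne, ha⟩)
    · exact ⟨hne, (ha _).mpr (Or.inr (Or.inr rfl)), (ha _).mpr (Or.inr (Or.inl rfl)),
        (ha _).mpr (Or.inl rfl)⟩
    · exact ⟨hne, ha _, ha _, ha _⟩
  intro u1 h1 u2 h2 hne
  by_contra hadj
  obtain ⟨hn1, hx1, hx2, hx3⟩ := hmem u1 h1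
  obtain ⟨hn2, hy1, hy2, hy3⟩ := hmem u2 h2
  exact key_coP3P2 G hco (v (i + 2)) (v i) (v (i - 2)) u1 u2
    (fun h => d1 i (hv h))
    (fun h => d2 i (hv h))
    hne
    ((hC5 (i + 2) (i - 2)).mpr (Or.inl (d3 i)))
    (fun h => d4 i ((hC5 (i + 2) i).mp h))
    (fun h => d5 i ((hC5 i (i - 2)).mp h))
    hx1 hx2 hx3 hy1 hy2 hy3 hadj
end

section
/- Let G be a \overline{P_3+P_2}-free graph containing an induced 5-cycle v_1v_2v_3v_4v_5. For each i, let C_i be the set of vertices outside the cycle whose cycle-neighbourhood is exactly {v_{i−1}, v_{i+1}}. Then each C_i is an independent set. -/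
open SimpleGraph

lemma key {V : Type} {G : SimpleGraph V} (a c b d e : V)
    (hab : G.Adj a b) (had : G.Adj a d) (hae : G.Adj a e)
    (hcd : G.Adj c d) (hce : G.Adj c e) (hbd : G.Adj b d) (hbe : G.Adj b e)
    (hac : ¬ G.Adj a c) (hcb : ¬ G.Adj c b) (hde : ¬ G.Adj d e)
    (h1 : a ≠ c) (h3 : a ≠ d) (h4 : a ≠ e) (h5 : c ≠ b) (h6 : c ≠ d)
    (h7 : c ≠ e) (h8 : b ≠ d) (h9 : b ≠ e) (h10 : d ≠ e) :
    HasInducedCopy G coP3P2 := by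
  have h2 : a ≠ b := hab.ne
  set f : Fin 5 → V := ![a, c, b, d, e] with hf
  have hinj : Function.Injective f := by
    intro x y h
    fin_cases x <;> fin_cases y <;> simp_all [f]
  have hca : ¬ G.Adj c a := fun h => hac h.symm
  have hbc : ¬ G.Adj b c := fun h => hcb h.symm
  have hed : ¬ G.Adj e d := fun h => hde h.symm
  refine ⟨Set.range f, ⟨RelIso.mk (Equiv.ofInjective f hinj) ?_⟩⟩
  intro x y
  simp only [Equiv.ofInjective, comap_adj, Function.Embedding.coeFn_mk]
  fin_cases x <;> fin_cases y <;>
    simp [f, coP3P2, P3P2, hab, had, hae, hcd, hce, hbd, hbe, hac, hcb, hde,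
      hab.symm, had.symm, hae.symm, hcd.symm, hce.symm, hbd.symm, hbe.symm, hca, hbc, hed]

/-- In a `co(P3+P2)`-free graph with an induced 5-cycle, each set `C_i` of outside
vertices with cycle-neighbourhood exactly `{v_{i-1}, v_{i+1}}` is independent. -/
theorem stmt_10 {V : Type} [Fintype V] (G : SimpleGraph V)
    (hco : ¬ HasInducedCopy G coP3P2)
    (v : Fin 5 → V) (hv : Function.Injective v)
    (hC5 : ∀ i j : Fin 5, G.Adj (v i) (v j) ↔ (j = i + 1 ∨ i = j + 1)) :
    ∀ i : Fin 5, ∀ a ∈ {u : V | (∀ j, u ≠ v j) ∧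
        ∀ j : Fin 5, G.Adj u (v j) ↔ (j = i - 1 ∨ j = i + 1)},
      ∀ b ∈ {u : V | (∀ j, u ≠ v j) ∧
        ∀ j : Fin 5, G.Adj u (v j) ↔ (j = i - 1 ∨ j = i + 1)}, ¬ G.Adj a b := by
  intro i a ha b hb hab
  obtain ⟨ha1, ha2⟩ := ha
  obtain ⟨hb1, hb2⟩ := hb
  have e1 : ∀ i : Fin 5, i ≠ i - 1 := by decide
  have e2 : ∀ i : Fin 5, i ≠ i + 1 := by decide
  have e3 : ∀ i : Fin 5, i = (i - 1) + 1 := by decide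
  have e4 : ∀ i : Fin 5, ¬ (i + 1 = (i - 1) + 1) := by decide
  have e5 : ∀ i : Fin 5, ¬ (i - 1 = (i + 1) + 1) := by decide
  have e6 : ∀ i : Fin 5, i - 1 ≠ i + 1 := by decide
  apply hco
  refine key a (v i) b (v (i - 1)) (v (i + 1)) hab
    ((ha2 (i - 1)).2 (Or.inl rfl)) ((ha2 (i + 1)).2 (Or.inr rfl))
    ((hC5 i (i - 1)).2 (Or.inr (e3 i))) ((hC5 i (i + 1)).2 (Or.inl rfl))
    ((hb2 (i - 1)).2 (Or.inl rfl)) ((hb2 (i + 1)).2 (Or.inr rfl))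
    (fun h => ((ha2 i).1 h).elim (e1 i) (e2 i))
    (fun h => ((hb2 i).1 h.symm).elim (e1 i) (e2 i))
    (fun h => ((hC5 (i - 1) (i + 1)).1 h).elim (e4 i) (e5 i))
    (ha1 i) (ha1 (i - 1)) (ha1 (i + 1)) (fun h => hb1 i h.symm) (hv.ne (e1 i))
    (hv.ne (e2 i)) (hb1 (i - 1)) (hb1 (i + 1))
    (hv.ne (e6 i))
end

section
/- Let G be a \overline{P_3+P_2}-free graph containing an induced 5-cycle v_1v_2v_3v_4v_5. For each i, let T_i be the set of vertices outside the cycle whose cycle-neighbourhood is exactly {v_{i−1}, v_i, v_{i+1}}. Then the induced subgraph G[T_i] contains no induced P_2 + P_1, and hence is a complete multipartite graph. -/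
open SimpleGraph

lemma hasInducedCopy_of_map {W : Type} {n : ℕ} (K : SimpleGraph (Fin n)) (H : SimpleGraph W)
    (g : Fin n → W) (hinj : Function.Injective g)
    (hadj : ∀ a b, K.Adj a b ↔ H.Adj (g a) (g b)) : HasInducedCopy H K := by
  refine ⟨Set.range g, ⟨⟨Equiv.ofInjective g hinj, ?_⟩⟩⟩
  intro a b
  simp only [Equiv.ofInjective_apply, comap_adj]
  exact (hadj a b).symm

lemma coP3P2_copy {W : Type} (H : SimpleGraph W) (x y z p q : W)
    (hxy : H.Adj x y) (hxz : ¬H.Adj x z) (hyz : ¬H.Adj y z)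
    (hxp : H.Adj x p) (hyp : H.Adj y p) (hzp : H.Adj z p)
    (hxq : H.Adj x q) (hyq : H.Adj y q) (hzq : H.Adj z q)
    (hpq : ¬H.Adj p q)
    (nxz : x ≠ z) (nyz : y ≠ z) (npq : p ≠ q) : HasInducedCopy H coP3P2 := by
  have nxy : x ≠ y := hxy.ne
  have nxp : x ≠ p := hxp.ne
  have nxq : x ≠ q := hxq.ne
  have nyp : y ≠ p := hyp.ne
  have nyq : y ≠ q := hyq.ne
  have nzp : z ≠ p := hzp.ne
  have nzq : z ≠ q := hzq.ne
  apply hasInducedCopy_of_map coP3P2 H ![x, z, y, p, q]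
  · intro a b h
    fin_cases a <;> fin_cases b <;>
      simp_all
  · intro a b
    fin_cases a <;> fin_cases b <;>
      simp [coP3P2, P3P2, SimpleGraph.fromRel_adj, H.irrefl, nxy, nxz, nyz, npq, nxp, nxq,
        nyp, nyq, nzp, nzq, nxy.symm, nxz.symm, nyz.symm, npq.symm, nxp.symm, nxq.symm,
        nyp.symm, nyq.symm, nzp.symm, nzq.symm] <;>
      first
        | exact hxy | exact hxy.symm
        | exact hxz | exact fun h => hxz h.symm
        | exact hyz | exact fun h => hyz h.symm
        | exact hxp | exact hxp.symm
        | exact hyp | exact hyp.symm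
        | exact hzp | exact hzp.symm
        | exact hxq | exact hxq.symm
        | exact hyq | exact hyq.symm
        | exact hzq | exact hzq.symm
        | exact hpq | exact fun h => hpq h.symm

lemma p2p1_copy {W : Type} (H : SimpleGraph W) (x y z : W)
    (hxy : H.Adj x y) (hxz : ¬H.Adj x z) (hyz : ¬H.Adj y z)
    (nxz : x ≠ z) (nyz : y ≠ z) : HasInducedCopy H P2P1 := by
  have nxy : x ≠ y := hxy.ne
  apply hasInducedCopy_of_map P2P1 H ![x, y, z]
  · intro a b h
    fin_cases a <;> fin_cases b <;> simp_all
  · intro a b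
    fin_cases a <;> fin_cases b <;>
      simp [P2P1, SimpleGraph.fromRel_adj, H.irrefl, nxy, nxz, nyz, nxy.symm, nxz.symm, nyz.symm] <;>
      first
        | exact hxy | exact hxy.symm
        | exact hxz | exact fun h => hxz h.symm
        | exact hyz | exact fun h => hyz h.symm

lemma p2p1_extract {W : Type} (H : SimpleGraph W) (h : HasInducedCopy H P2P1) :
    ∃ x y z : W, H.Adj x y ∧ ¬H.Adj x z ∧ ¬H.Adj y z ∧ x ≠ z ∧ y ≠ z := by
  obtain ⟨s, ⟨e⟩⟩ := h
  refine ⟨(e 0 : ↥s), (e 1 : ↥s), (e 2 : ↥s), ?_, ?_, ?_, ?_, ?_⟩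
  · exact e.map_adj_iff.mpr (by simp [P2P1])
  · exact fun h => (by simp [P2P1] : ¬ P2P1.Adj 0 2) (e.map_adj_iff.mp h)
  · exact fun h => (by simp [P2P1] : ¬ P2P1.Adj 1 2) (e.map_adj_iff.mp h)
  · exact fun h => absurd (e.injective (Subtype.ext h)) (by decide)
  · exact fun h => absurd (e.injective (Subtype.ext h)) (by decide)

lemma fin5_a : ∀ i : Fin 5, ¬(i + 1 = i - 1 + 1 ∨ i - 1 = i + 1 + 1) := by decide
lemma fin5_b : ∀ i : Fin 5, i - 1 ≠ i + 1 := by decide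

/-- In a `co(P3+P2)`-free graph with an induced 5-cycle, each `G[T_i]` is
`(P2+P1)`-free, hence a complete multipartite graph. -/
theorem stmt_11 {V : Type} [Fintype V] (G : SimpleGraph V)
    (hco : ¬ HasInducedCopy G coP3P2)
    (v : Fin 5 → V) (hv : Function.Injective v)
    (hC5 : ∀ i j : Fin 5, G.Adj (v i) (v j) ↔ (j = i + 1 ∨ i = j + 1)) :
    ∀ i : Fin 5,
      ¬ HasInducedCopy (G.induce {u : V | (∀ j, u ≠ v j) ∧
          ∀ j : Fin 5, G.Adj u (v j) ↔ (j = i - 1 ∨ j = i ∨ j = i + 1)}) P2P1 ∧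
      ∃ f : {u : V | (∀ j, u ≠ v j) ∧
          ∀ j : Fin 5, G.Adj u (v j) ↔ (j = i - 1 ∨ j = i ∨ j = i + 1)} → ℕ,
        ∀ a b, a ≠ b →
          ((G.induce {u : V | (∀ j, u ≠ v j) ∧
              ∀ j : Fin 5, G.Adj u (v j) ↔ (j = i - 1 ∨ j = i ∨ j = i + 1)}).Adj a b ↔
            f a ≠ f b) := by
  intro i
  set T : Set V := {u : V | (∀ j, u ≠ v j) ∧
      ∀ j : Fin 5, G.Adj u (v j) ↔ (j = i - 1 ∨ j = i ∨ j = i + 1)} with hT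
  have hfree : ¬ HasInducedCopy (G.induce T) P2P1 := by
    intro h
    obtain ⟨x, y, z, hxy, hxz, hyz, nxz, nyz⟩ := p2p1_extract _ h
    have hxm : (∀ j, x.val ≠ v j) ∧
        ∀ j : Fin 5, G.Adj x.val (v j) ↔ (j = i - 1 ∨ j = i ∨ j = i + 1) := x.2
    have hym : (∀ j, y.val ≠ v j) ∧
        ∀ j : Fin 5, G.Adj y.val (v j) ↔ (j = i - 1 ∨ j = i ∨ j = i + 1) := y.2
    have hzm : (∀ j, z.val ≠ v j) ∧
        ∀ j : Fin 5, G.Adj z.val (v j) ↔ (j = i - 1 ∨ j = i ∨ j = i + 1) := z.2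
    apply hco
    refine coP3P2_copy G x.val y.val z.val (v (i - 1)) (v (i + 1)) hxy hxz hyz
      ((hxm.2 _).mpr (Or.inl rfl)) ((hym.2 _).mpr (Or.inl rfl)) ((hzm.2 _).mpr (Or.inl rfl))
      ((hxm.2 _).mpr (Or.inr (Or.inr rfl))) ((hym.2 _).mpr (Or.inr (Or.inr rfl)))
      ((hzm.2 _).mpr (Or.inr (Or.inr rfl)))
      ?_ (fun h => nxz (Subtype.ext h)) (fun h => nyz (Subtype.ext h))
      (fun h => fin5_b i (hv h))
    rw [hC5]
    exact fin5_a i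
  refine ⟨hfree, ?_⟩
  -- complete multipartite structure
  have htrans : ∀ a b c : ↥T, ¬(G.induce T).Adj a b → ¬(G.induce T).Adj b c →
      ¬(G.induce T).Adj a c := by
    intro a b c hab hbc hac
    rcases eq_or_ne a b with rfl | nab
    · exact hbc hac
    rcases eq_or_ne b c with rfl | nbc
    · exact hab hac
    exact hfree (p2p1_copy _ a c b hac hab (fun h => hbc h.symm) nab nbc.symm)
  let st : Setoid ↥T := ⟨fun a b => ¬(G.induce T).Adj a b,
    ⟨fun a => (G.induce T).irrefl, fun h hadj => h hadj.symm, fun h1 h2 => htrans _ _ _ h1 h2⟩⟩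
  have : Finite ↥T := Subtype.finite
  have : Countable (Quotient st) := Finite.to_countable
  obtain ⟨q, hq⟩ := Countable.exists_injective_nat (Quotient st)
  refine ⟨fun a => q (Quotient.mk st a), ?_⟩
  intro a b hab
  constructor
  · intro hadj h
    exact Quotient.exact (hq h) hadj
  · intro hne
    by_contra hadj
    exact hne (congrArg q (Quotient.sound (s := st) hadj))
end

section
/- Let G be a (P_5, \overline{P_3+P_2})-free graph containing an induced 5-cycle v_1v_2v_3v_4v_5, and let C_i and T_i denote the sets of outside vertices with cycle-neighbourhood exactly {v_{i−1},v_{i+1}} and {v_{i−1},v_i,v_{i+1}} respectively. Then C_i is complete to T_i and anticomplete to T_{i+1} and T_{i−1}. -/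
open SimpleGraph

/-- From five vertices whose induced pattern is the complement of `P3 + P2`
(non-edges exactly `x0x1`, `x1x2`, `x3x4`), we get an induced copy of `coP3P2`. -/
lemma build_coP3P2 {V : Type} (G : SimpleGraph V) (x0 x1 x2 x3 x4 : V)
    (h01 : x0 ≠ x1) (h12 : x1 ≠ x2) (h34 : x3 ≠ x4)
    (e02 : G.Adj x0 x2) (e03 : G.Adj x0 x3) (e04 : G.Adj x0 x4)
    (e13 : G.Adj x1 x3) (e14 : G.Adj x1 x4) (e23 : G.Adj x2 x3) (e24 : G.Adj x2 x4)
    (n01 : ¬ G.Adj x0 x1) (n12 : ¬ G.Adj x1 x2) (n34 : ¬ G.Adj x3 x4) :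
    HasInducedCopy G coP3P2 := by
  set f : Fin 5 → V := ![x0, x1, x2, x3, x4] with hf
  have h02 := e02.ne; have h03 := e03.ne; have h04 := e04.ne
  have h13 := e13.ne; have h14 := e14.ne; have h23 := e23.ne; have h24 := e24.ne
  have hinj : Function.Injective f := by
    intro a b hab
    fin_cases a <;> fin_cases b <;> simp_all [f]
  refine ⟨Set.range f, ⟨⟨Equiv.ofInjective f hinj, ?_⟩⟩⟩
  intro a b
  show G.Adj (f a) (f b) ↔ coP3P2.Adj a b
  fin_cases a <;> fin_cases b <;>
    simp [f, coP3P2, P3P2, h01, h12, h34, h02, h03, h04, h13, h14, h23, h24] <;>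
    first
      | exact e02 | exact e03 | exact e04 | exact e13 | exact e14 | exact e23 | exact e24
      | exact e02.symm | exact e03.symm | exact e04.symm | exact e13.symm | exact e14.symm
      | exact e23.symm | exact e24.symm
      | exact n01 | exact n12 | exact n34
      | exact fun h => n01 h.symm | exact fun h => n12 h.symm | exact fun h => n34 h.symm

/-- The normalized (`i = 0`) form of the theorem. -/
lemma core_coP3P2 {V : Type} (G : SimpleGraph V)
    (hco : ¬ HasInducedCopy G coP3P2)
    (w : Fin 5 → V) (hw : Function.Injective w)
    (hC : ∀ a b, G.Adj (w a) (w b) ↔ (b = a + 1 ∨ a = b + 1))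
    (c : V) (hcv : ∀ j, c ≠ w j)
    (hcadj : ∀ j, G.Adj c (w j) ↔ (j = 4 ∨ j = 1)) :
    (∀ t, (∀ j, t ≠ w j) → (∀ j, G.Adj t (w j) ↔ (j = 4 ∨ j = 0 ∨ j = 1)) → G.Adj c t) ∧
    (∀ t, (∀ j, t ≠ w j) → (∀ j, G.Adj t (w j) ↔ (j = 0 ∨ j = 1 ∨ j = 2)) → ¬ G.Adj c t) ∧
    (∀ t, (∀ j, t ≠ w j) → (∀ j, G.Adj t (w j) ↔ (j = 3 ∨ j = 4 ∨ j = 0)) → ¬ G.Adj c t) := by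
  refine ⟨?_, ?_, ?_⟩
  · -- complete to T_0
    intro t htv ht
    by_contra hct
    exact hco <| build_coP3P2 G (w 0) c t (w 1) (w 4)
      (Ne.symm (hcv 0))
      (fun h => (hcadj 0).mp (h ▸ (ht 0).mpr (by decide)) |>.elim (by decide) (by decide))
      (hw.ne (by decide))
      (((ht 0).mpr (by decide)).symm)
      ((hC 0 1).mpr (by decide)) ((hC 0 4).mpr (by decide))
      ((hcadj 1).mpr (by decide)) ((hcadj 4).mpr (by decide))
      ((ht 1).mpr (by decide)) ((ht 4).mpr (by decide))
      (fun h => by have := (hcadj 0).mp h.symm; revert this; decide)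
      hct
      (fun h => by have := (hC 1 4).mp h; revert this; decide)
  · -- anticomplete to T_1
    intro t htv ht hct
    exact hco <| build_coP3P2 G (w 1) (w 4) t c (w 0)
      (hw.ne (by decide)) (Ne.symm (htv 4)) (hcv 0)
      (((ht 1).mpr (by decide)).symm)
      (((hcadj 1).mpr (by decide)).symm)
      ((hC 1 0).mpr (by decide))
      (((hcadj 4).mpr (by decide)).symm)
      ((hC 4 0).mpr (by decide))
      hct.symm
      ((ht 0).mpr (by decide))
      (fun h => by have := (hC 1 4).mp h; revert this; decide)
      (fun h => by have := (ht 4).mp h.symm; revert this; decide)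
      (fun h => by have := (hcadj 0).mp h; revert this; decide)
  · -- anticomplete to T_4
    intro t htv ht hct
    exact hco <| build_coP3P2 G t (w 1) (w 4) c (w 0)
      (htv 1) (hw.ne (by decide)) (hcv 0)
      ((ht 4).mpr (by decide))
      hct.symm
      ((ht 0).mpr (by decide))
      (((hcadj 1).mpr (by decide)).symm)
      ((hC 1 0).mpr (by decide))
      (((hcadj 4).mpr (by decide)).symm)
      ((hC 4 0).mpr (by decide))
      (fun h => by have := (ht 1).mp h; revert this; decide)
      (fun h => by have := (hC 1 4).mp h; revert this; decide)
      (fun h => by have := (hcadj 0).mp h; revert this; decide)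

/-- In a `(P5, co(P3+P2))`-free graph with an induced 5-cycle, `C_i` is complete to
`T_i` and anticomplete to `T_{i+1}` and `T_{i-1}`. -/
theorem stmt_14 {V : Type} [Fintype V] (G : SimpleGraph V)
    (hP5 : ¬ HasInducedCopy G P5) (hco : ¬ HasInducedCopy G coP3P2)
    (v : Fin 5 → V) (hv : Function.Injective v)
    (hC5 : ∀ i j : Fin 5, G.Adj (v i) (v j) ↔ (j = i + 1 ∨ i = j + 1)) :
    ∀ i : Fin 5,
      ∀ c ∈ {u : V | (∀ j, u ≠ v j) ∧
          ∀ j : Fin 5, G.Adj u (v j) ↔ (j = i - 1 ∨ j = i + 1)},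
        (∀ t ∈ {u : V | (∀ j, u ≠ v j) ∧
            ∀ j : Fin 5, G.Adj u (v j) ↔ (j = i - 1 ∨ j = i ∨ j = i + 1)}, G.Adj c t) ∧
        (∀ t ∈ {u : V | (∀ j, u ≠ v j) ∧
            ∀ j : Fin 5, G.Adj u (v j) ↔ (j = (i + 1) - 1 ∨ j = i + 1 ∨ j = (i + 1) + 1)},
          ¬ G.Adj c t) ∧
        (∀ t ∈ {u : V | (∀ j, u ≠ v j) ∧
            ∀ j : Fin 5, G.Adj u (v j) ↔ (j = (i - 1) - 1 ∨ j = i - 1 ∨ j = (i - 1) + 1)},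
          ¬ G.Adj c t) := by
  have key : ∀ i a b : Fin 5,
      (b + i = a + i + 1 ∨ a + i = b + i + 1) ↔ (b = a + 1 ∨ a = b + 1) := by decide
  have keyC : ∀ i j : Fin 5, (j + i = i - 1 ∨ j + i = i + 1) ↔ (j = 4 ∨ j = 1) := by decide
  have keyT0 : ∀ i j : Fin 5,
      (j + i = i - 1 ∨ j + i = i ∨ j + i = i + 1) ↔ (j = 4 ∨ j = 0 ∨ j = 1) := by decide
  have keyT1 : ∀ i j : Fin 5,
      (j + i = (i + 1) - 1 ∨ j + i = i + 1 ∨ j + i = (i + 1) + 1) ↔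
        (j = 0 ∨ j = 1 ∨ j = 2) := by decide
  have keyT4 : ∀ i j : Fin 5,
      (j + i = (i - 1) - 1 ∨ j + i = i - 1 ∨ j + i = (i - 1) + 1) ↔
        (j = 3 ∨ j = 4 ∨ j = 0) := by decide
  intro i c hc
  set w : Fin 5 → V := fun j => v (j + i) with hwdef
  have hw : Function.Injective w := fun a b h => add_right_cancel (hv h)
  have hC : ∀ a b, G.Adj (w a) (w b) ↔ (b = a + 1 ∨ a = b + 1) := by
    intro a b; rw [hwdef]; simp only [hC5]; exact key i a b
  have hcv : ∀ j, c ≠ w j := fun j => hc.1 (j + i)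
  have hcadj : ∀ j, G.Adj c (w j) ↔ (j = 4 ∨ j = 1) := by
    intro j; rw [hwdef]; simp only [hc.2]; exact keyC i j
  obtain ⟨H1, H2, H3⟩ := core_coP3P2 G hco w hw hC c hcv hcadj
  refine ⟨?_, ?_, ?_⟩
  · intro t ht
    exact H1 t (fun j => ht.1 (j + i))
      (fun j => by rw [hwdef]; simp only [ht.2]; exact keyT0 i j)
  · intro t ht
    exact H2 t (fun j => ht.1 (j + i))
      (fun j => by rw [hwdef]; simp only [ht.2]; exact keyT1 i j)
  · intro t ht
    exact H3 t (fun j => ht.1 (j + i))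
      (fun j => by rw [hwdef]; simp only [ht.2]; exact keyT4 i j)
end
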